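/- arXiv:2205.03198 — 3 statements merged into one kernel-verified Lean document; each statement's English description precedes it below -/
import Mathlib

section
/- Let k ∈ ℕ and let φ ∈ SL∪{*} and ψ ∈ SL. If φ ⊢_k ψ, then there exists a tree T_k of depth k rooted in φ (a member of some DBT-sequence) such that α ⊢_0 ψ for every leaf α ∈ Le(T_k). -/
/-!
Common framework: Depth-Bounded Boolean Logics, depth-bounded trees/forests,
mass functions and depth-bounded belief functions.
-/

namespace DBB

/-- Sentences of a propositional language with propositional variables in `V`,
connectives ¬, ∧, ∨ and the constant ⊥. -/
inductive Sentence (V : Type) : Type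
  | var  : V → Sentence V
  | bot  : Sentence V
  | neg  : Sentence V → Sentence V
  | conj : Sentence V → Sentence V → Sentence V
  | disj : Sentence V → Sentence V → Sentence V
  deriving DecidableEq

variable {V : Type}

/-- Boolean evaluation of a sentence under a valuation of the variables. -/
def eval (v : V → Bool) : Sentence V → Bool
  | .var p => v p
  | .bot => false
  | .neg φ => !(eval v φ)
  | .conj φ ψ => eval v φ && eval v ψ
  | .disj φ ψ => eval v φ || eval v ψ

/-- Classical (semantic) consequence `Γ ⊢ φ`. -/
def CC (Γ : Set (Sentence V)) (φ : Sentence V) : Prop :=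
  ∀ v : V → Bool, (∀ γ ∈ Γ, eval v γ = true) → eval v φ = true

/-- The 0-depth consequence relation `Γ ⊢₀ φ`: closure of `Γ` under the standard
introduction and elimination rules for ¬, ∧, ∨, ⊥. -/
inductive Der0 : Set (Sentence V) → Sentence V → Prop
  | prem {Γ : Set (Sentence V)} {φ} (h : φ ∈ Γ) : Der0 Γ φ
  | andI {Γ φ ψ} : Der0 Γ φ → Der0 Γ ψ → Der0 Γ (.conj φ ψ)
  | andE1 {Γ φ ψ} : Der0 Γ (.conj φ ψ) → Der0 Γ φ
  | andE2 {Γ φ ψ} : Der0 Γ (.conj φ ψ) → Der0 Γ ψ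
  | orI1 {Γ φ ψ} : Der0 Γ φ → Der0 Γ (.disj φ ψ)
  | orI2 {Γ φ ψ} : Der0 Γ ψ → Der0 Γ (.disj φ ψ)
  | orE1 {Γ φ ψ} : Der0 Γ (.disj φ ψ) → Der0 Γ (.neg φ) → Der0 Γ ψ
  | orE2 {Γ φ ψ} : Der0 Γ (.disj φ ψ) → Der0 Γ (.neg ψ) → Der0 Γ φ
  | negAndI1 {Γ φ ψ} : Der0 Γ (.neg φ) → Der0 Γ (.neg (.conj φ ψ))
  | negAndI2 {Γ φ ψ} : Der0 Γ (.neg ψ) → Der0 Γ (.neg (.conj φ ψ))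
  | negAndE1 {Γ φ ψ} : Der0 Γ (.neg (.conj φ ψ)) → Der0 Γ φ → Der0 Γ (.neg ψ)
  | negAndE2 {Γ φ ψ} : Der0 Γ (.neg (.conj φ ψ)) → Der0 Γ ψ → Der0 Γ (.neg φ)
  | negOrI {Γ φ ψ} : Der0 Γ (.neg φ) → Der0 Γ (.neg ψ) → Der0 Γ (.neg (.disj φ ψ))
  | negOrE1 {Γ φ ψ} : Der0 Γ (.neg (.disj φ ψ)) → Der0 Γ (.neg φ)
  | negOrE2 {Γ φ ψ} : Der0 Γ (.neg (.disj φ ψ)) → Der0 Γ (.neg ψ)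
  | dnI {Γ φ} : Der0 Γ φ → Der0 Γ (.neg (.neg φ))
  | dnE {Γ φ} : Der0 Γ (.neg (.neg φ)) → Der0 Γ φ
  | botI {Γ φ} : Der0 Γ φ → Der0 Γ (.neg φ) → Der0 Γ .bot
  | botE {Γ φ} : Der0 Γ .bot → Der0 Γ φ

/-- The set of subsentences of a sentence. -/
def subs : Sentence V → Set (Sentence V)
  | .var p => {Sentence.var p}
  | .bot => {Sentence.bot}
  | .neg φ => insert (.neg φ) (subs φ)
  | .conj φ ψ => insert (.conj φ ψ) (subs φ ∪ subs ψ)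
  | .disj φ ψ => insert (.disj φ ψ) (subs φ ∪ subs ψ)

/-- Subsentences of a set of sentences. -/
def subsSet (Γ : Set (Sentence V)) : Set (Sentence V) := ⋃ γ ∈ Γ, subs γ

/-- The k-depth consequence relations `Γ ⊢ₖ φ`: for `k > 0`, `Γ ⊢ₖ φ` iff there is a
subsentence `β` of `Γ ∪ {φ}` such that `Γ, β ⊢_{k-1} φ` and `Γ, ¬β ⊢_{k-1} φ`. -/
def DerK : ℕ → Set (Sentence V) → Sentence V → Prop
  | 0, Γ, φ => Der0 Γ φ
  | k+1, Γ, φ => ∃ β, β ∈ subsSet (insert φ Γ) ∧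
      DerK k (insert β Γ) φ ∧ DerK k (insert (Sentence.neg β) Γ) φ

/-- Elements of `SL ∪ {*}`: `none` is the empty information `*`, `some γ` is the sentence `γ`.
`prems` gives the corresponding set of premises. -/
def prems : Option (Sentence V) → Set (Sentence V)
  | none => ∅
  | some γ => {γ}

/-- `r ⊢₀ φ` for `r ∈ SL ∪ {*}`. -/
def Der0O (r : Option (Sentence V)) (φ : Sentence V) : Prop := Der0 (prems r) φ

/-- `r ⊢ₖ φ` for `r ∈ SL ∪ {*}`. -/
def DerKO (k : ℕ) (r : Option (Sentence V)) (φ : Sentence V) : Prop := DerK k (prems r) φ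

/-- classical consequence from `r ∈ SL ∪ {*}`. -/
def CCO (r : Option (Sentence V)) (φ : Sentence V) : Prop := CC (prems r) φ

/-- `r ⊢₀ s` where also the conclusion may be the empty information `*`
(deriving `*` is trivial). -/
def Der0OO (r : Option (Sentence V)) : Option (Sentence V) → Prop
  | none => True
  | some φ => Der0O r φ

/-! ### Depth-bounded trees -/

/-- Binary trees whose internal nodes are labelled by the branching sentence `β`:
a node with branching sentence `β` and current information `α` has children carrying
the information `α ∧ β` and `α ∧ ¬β` respectively. -/
inductive DBTree (V : Type) : Type
  | leaf : DBTree V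
  | node : Sentence V → DBTree V → DBTree V → DBTree V
  deriving DecidableEq

/-- The information carried by a child of a node with information `r ∈ SL ∪ {*}` and
branching sentence `β`: `r ∧ β` (or just `β` when `r = *`). -/
def extend (r : Option (Sentence V)) (β : Sentence V) : Option (Sentence V) :=
  some (match r with
    | none => β
    | some α => Sentence.conj α β)

/-- The set `Le(T)` of labels of the leaves of a tree `t` rooted in `r ∈ SL ∪ {*}`. -/
def leafLabels [DecidableEq V] : Option (Sentence V) → DBTree V → Finset (Option (Sentence V))
  | r, .leaf => {r}
  | r, .node β t₁ t₂ =>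
      leafLabels (extend r β) t₁ ∪ leafLabels (extend r (.neg β)) t₂

/-- The number of leaves of a tree. -/
def numLeaves : DBTree V → ℕ
  | .leaf => 1
  | .node _ t₁ t₂ => numLeaves t₁ + numLeaves t₂

/-- `Grow k t t'`: `t'` is obtained from `t` by expanding a (possibly empty) subset of the
depth-`k` leaves of `t`, each expanded leaf getting two children via some branching sentence. -/
inductive Grow : ℕ → DBTree V → DBTree V → Prop
  | keep (k : ℕ) : Grow k .leaf .leaf
  | expand (β : Sentence V) : Grow 0 .leaf (.node β .leaf .leaf)
  | node {k : ℕ} {t₁ t₁' t₂ t₂' : DBTree V} (β : Sentence V) :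
      Grow k t₁ t₁' → Grow k t₂ t₂' →
      Grow (k+1) (.node β t₁ t₂) (.node β t₁' t₂')

/-- A depth-bounded tree sequence (DBT-sequence): `T₀` is a single node, and `T_{k+1}` is
obtained from `T_k` by branching at least one node of depth `k`. -/
structure DBTSeq (V : Type) where
  tree : ℕ → DBTree V
  init : tree 0 = DBTree.leaf
  grow : ∀ k, Grow k (tree k) (tree (k+1))
  progress : ∀ k, tree (k+1) ≠ tree k

/-- `t` is a tree of depth `k` belonging to some DBT-sequence. -/
def IsDepthKTree (k : ℕ) (t : DBTree V) : Prop := ∃ S : DBTSeq V, S.tree k = t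

/-- `r` decides `φ`: `r ⊢₀ φ` or `r ⊢₀ ¬φ`. -/
def Decides (r : Option (Sentence V)) (φ : Sentence V) : Prop :=
  Der0O r φ ∨ Der0O r (.neg φ)

/-- `|dec(Γ, φ)|`: the number of elements of `Γ` deciding `φ`. -/
noncomputable def decCount [DecidableEq V] (Γ : Finset (Option (Sentence V)))
    (φ : Sentence V) : ℕ := by
  classical exact (Γ.filter (fun α => Decides α φ)).card

/-- A tree rooted in `r` is `{φ}`-closed iff all its leaves decide `φ`. -/
def TreeClosed [DecidableEq V] (r : Option (Sentence V)) (t : DBTree V) (φ : Sentence V) : Prop :=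
  ∀ α ∈ leafLabels r t, Decides α φ

/-- A tree `t` of depth `k` rooted in `r` is `{φ}`-maximal iff no depth-`k` tree with the same
root has strictly more leaves deciding `φ`. -/
def TreeMaximal [DecidableEq V] (r : Option (Sentence V)) (k : ℕ) (t : DBTree V)
    (φ : Sentence V) : Prop :=
  ∀ t' : DBTree V, IsDepthKTree k t' →
    decCount (leafLabels r t') φ ≤ decCount (leafLabels r t) φ

/-- A tree rooted in `r` is free of deep contradictions iff every classically inconsistent
leaf is already 0-depth inconsistent. -/
def TreeFreeDC [DecidableEq V] (r : Option (Sentence V)) (t : DBTree V) : Prop :=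
  ∀ α ∈ leafLabels r t, CCO α Sentence.bot → Der0O α Sentence.bot

/-! ### Depth-bounded forests -/

/-- A depth-bounded forest sequence (DBF-sequence) based on the support set
`Supp ⊆ SL ∪ {*}`: a DBT-sequence rooted in `γ` for each `γ ∈ Supp`. -/
structure DBFSeq (V : Type) where
  Supp : Finset (Option (Sentence V))
  suppNE : Supp.Nonempty
  tree : Option (Sentence V) → ℕ → DBTree V
  init : ∀ γ ∈ Supp, tree γ 0 = DBTree.leaf
  grow : ∀ γ ∈ Supp, ∀ k, Grow k (tree γ k) (tree γ (k+1))
  progress : ∀ γ ∈ Supp, ∀ k, tree γ (k+1) ≠ tree γ k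

/-- `Le(F_k)`: the leaves of the depth-`k` forest of a DBF-sequence. -/
noncomputable def DBFSeq.leaves [DecidableEq V] (F : DBFSeq V) (k : ℕ) :
    Finset (Option (Sentence V)) := by
  classical exact F.Supp.biUnion (fun γ => leafLabels γ (F.tree γ k))

/-- The depth-`k` forest is `{φ}`-closed (tree-wise). -/
def DBFSeq.Closed [DecidableEq V] (F : DBFSeq V) (k : ℕ) (φ : Sentence V) : Prop :=
  ∀ γ ∈ F.Supp, TreeClosed γ (F.tree γ k) φ

/-- The depth-`k` forest is `{φ}`-maximal (tree-wise). -/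
def DBFSeq.Maximal [DecidableEq V] (F : DBFSeq V) (k : ℕ) (φ : Sentence V) : Prop :=
  ∀ γ ∈ F.Supp, TreeMaximal γ k (F.tree γ k) φ

/-- The depth-`k` forest is free of deep contradictions (tree-wise). -/
def DBFSeq.FreeDC [DecidableEq V] (F : DBFSeq V) (k : ℕ) : Prop :=
  ∀ γ ∈ F.Supp, TreeFreeDC γ (F.tree γ k)

/-- `MassStep m m' r t t'`: the mass function `m'` refines `m` along the expansion of `t`
into `t'` (leaves keep their mass; the mass of an expanded leaf is split among its
two children). -/
inductive MassStep (m m' : Option (Sentence V) → ℝ) :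
    Option (Sentence V) → DBTree V → DBTree V → Prop
  | keep {r : Option (Sentence V)} :
      m' r = m r → MassStep m m' r .leaf .leaf
  | split {r : Option (Sentence V)} {β : Sentence V} :
      m' (extend r β) + m' (extend r (.neg β)) = m r →
      MassStep m m' r .leaf (.node β .leaf .leaf)
  | node {r : Option (Sentence V)} {β : Sentence V} {t₁ t₁' t₂ t₂' : DBTree V} :
      MassStep m m' (extend r β) t₁ t₁' →
      MassStep m m' (extend r (.neg β)) t₂ t₂' →
      MassStep m m' r (.node β t₁ t₂) (.node β t₁' t₂')

/-- A depth-bounded mass sequence (DBM-sequence): a DBF-sequence free of deep contradictions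
together with probability mass functions `m_k` over `Le(F_k)` such that the mass of each leaf
of `F_k` is either kept (if it remains a leaf) or split among its two children in `F_{k+1}`. -/
structure DBMSeq (V : Type) [DecidableEq V] extends DBFSeq V where
  m : ℕ → Option (Sentence V) → ℝ
  nonneg : ∀ k, ∀ α ∈ toDBFSeq.leaves k, 0 ≤ m k α
  total : ∀ k, ∑ α ∈ toDBFSeq.leaves k, m k α = 1
  incZero : ∀ k, ∀ α ∈ toDBFSeq.leaves k, Der0O α Sentence.bot → m k α = 0
  freeDC : ∀ k, toDBFSeq.FreeDC k
  massStep : ∀ γ ∈ toDBFSeq.Supp, ∀ k,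
      MassStep (m k) (m (k+1)) γ (toDBFSeq.tree γ k) (toDBFSeq.tree γ (k+1))

/-- The k-depth belief function `B_k(φ) = m_k(b_k(φ))` where
`b_k(φ) = {α ∈ Le(F_k) : α ⊢₀ φ, α ⊬₀ ⊥}`. -/
noncomputable def DBMSeq.B [DecidableEq V] (M : DBMSeq V) (k : ℕ) (φ : Sentence V) : ℝ := by
  classical exact ∑ α ∈ M.toDBFSeq.leaves k,
    if Der0O α φ ∧ ¬ Der0O α Sentence.bot then M.m k α else 0

/-- The k-depth plausibility function `Pl_k(φ) = m_k(pl_k(φ))` where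
`pl_k(φ) = {α ∈ Le(F_k) : α ⊬₀ ¬φ}`. -/
noncomputable def DBMSeq.Pl [DecidableEq V] (M : DBMSeq V) (k : ℕ) (φ : Sentence V) : ℝ := by
  classical exact ∑ α ∈ M.toDBFSeq.leaves k,
    if ¬ Der0O α (Sentence.neg φ) then M.m k α else 0

/-! ### Auxiliary notions -/

/-- A probability function on `SL`: a `[0,1]`-valued function which is normalised on
classical tautologies and additive on classically incompatible disjuncts. -/
def IsProbability (P : Sentence V → ℝ) : Prop :=
  (∀ φ, 0 ≤ P φ ∧ P φ ≤ 1) ∧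
  (∀ φ, CC (∅ : Set (Sentence V)) φ → P φ = 1) ∧
  (∀ φ ψ, CC (∅ : Set (Sentence V)) (.neg (.conj φ ψ)) →
    P (.disj φ ψ) = P φ + P ψ)

/-- The literal on `p` prescribed by the valuation `v`. -/
def litOf (v : V → Bool) (p : V) : Sentence V :=
  if v p then .var p else .neg (.var p)

/-- Left-associated conjunction `φ ∧ ψ₁ ∧ ⋯ ∧ ψₙ`. -/
def listConj : Sentence V → List (Sentence V) → Sentence V
  | φ, [] => φ
  | φ, ψ :: l => listConj (.conj φ ψ) l

/-- Left-associated disjunction `φ ∨ ψ₁ ∨ ⋯ ∨ ψₙ`. -/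
def listDisj : Sentence V → List (Sentence V) → Sentence V
  | φ, [] => φ
  | φ, ψ :: l => listDisj (.disj φ ψ) l

/-- Conjunction of a list of sentences (`⊥` for the empty list, which is never used). -/
def conjList : List (Sentence V) → Sentence V
  | [] => .bot
  | ψ :: l => listConj ψ l

/-- Disjunction of a list of sentences (`⊥` for the empty list, which is never used). -/
def disjList : List (Sentence V) → Sentence V
  | [] => .bot
  | ψ :: l => listDisj ψ l

/-- `α` is an atom of the language: a maximal (classically consistent) conjunction of
literals, with exactly one literal per propositional variable. -/
def IsAtom (α : Sentence V) : Prop :=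
  ∃ (v : V → Bool) (l : List V), l.Nodup ∧ (∀ p : V, p ∈ l) ∧ l ≠ [] ∧
    α = conjList (l.map (litOf v))

/-- The conjunction `⋀_{i ∈ S} φ_i` of a finite set of indexed sentences. -/
def finsetConj {n : ℕ} (φ : Fin n → Sentence V) (S : Finset (Fin n)) : Sentence V :=
  conjList ((S.sort (· ≤ ·)).map φ)

/-- The finite set of subsentences of a sentence. -/
def subsF [DecidableEq V] : Sentence V → Finset (Sentence V)
  | .var p => {Sentence.var p}
  | .bot => {Sentence.bot}
  | .neg φ => insert (.neg φ) (subsF φ)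
  | .conj φ ψ => insert (.conj φ ψ) (subsF φ ∪ subsF ψ)
  | .disj φ ψ => insert (.disj φ ψ) (subsF φ ∪ subsF ψ)

/-- All branching sentences of the tree belong to `S`. -/
def BranchesIn [DecidableEq V] : DBTree V → Finset (Sentence V) → Prop
  | .leaf, _ => True
  | .node β t₁ t₂, S => β ∈ S ∧ BranchesIn t₁ S ∧ BranchesIn t₂ S

/-!
Induction on `k`. If `Γ ⊢_{k+1} ψ` is witnessed by `β`, branch the root `r` on `β`: the children
`r ∧ β` and `r ∧ ¬β` 0-derive every premise of `Γ, β` and `Γ, ¬β` respectively, so the induction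
hypothesis, stated for every premise set that the root label 0-derives, gives the two subtrees.
Putting two members of DBT-sequences of depth `k` under a common root yields a member of a
DBT-sequence of depth `k + 1`.
-/

theorem Der0.cut {Γ Δ : Set (Sentence V)} {ψ : Sentence V}
    (h : Der0 Γ ψ) (hΔ : ∀ γ ∈ Γ, Der0 Δ γ) : Der0 Δ ψ := by
  induction h with
  | prem h => exact hΔ _ h
  | andI _ _ ih₁ ih₂ => exact .andI ih₁ ih₂
  | andE1 _ ih => exact .andE1 ih
  | andE2 _ ih => exact .andE2 ih
  | orI1 _ ih => exact .orI1 ih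
  | orI2 _ ih => exact .orI2 ih
  | orE1 _ _ ih₁ ih₂ => exact .orE1 ih₁ ih₂
  | orE2 _ _ ih₁ ih₂ => exact .orE2 ih₁ ih₂
  | negAndI1 _ ih => exact .negAndI1 ih
  | negAndI2 _ ih => exact .negAndI2 ih
  | negAndE1 _ _ ih₁ ih₂ => exact .negAndE1 ih₁ ih₂
  | negAndE2 _ _ ih₁ ih₂ => exact .negAndE2 ih₁ ih₂
  | negOrI _ _ ih₁ ih₂ => exact .negOrI ih₁ ih₂
  | negOrE1 _ ih => exact .negOrE1 ih
  | negOrE2 _ ih => exact .negOrE2 ih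
  | dnI _ ih => exact .dnI ih
  | dnE _ ih => exact .dnE ih
  | botI _ _ ih₁ ih₂ => exact .botI ih₁ ih₂
  | botE _ ih => exact .botE ih

theorem der0_extend_self (r : Option (Sentence V)) (β : Sentence V) :
    Der0O (extend r β) β := by
  cases r with
  | none => exact .prem rfl
  | some α => exact .andE2 (.prem rfl)

theorem Der0O.extend {r : Option (Sentence V)} {δ : Sentence V} (h : Der0O r δ)
    (β : Sentence V) : Der0O (extend r β) δ := by
  refine Der0.cut h fun γ hγ => ?_
  cases r with
  | none => exact absurd hγ (Set.notMem_empty γ)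
  | some α =>
    obtain rfl : γ = α := hγ
    exact .andE1 (.prem rfl)

theorem forall_der0_extend_of_insert {Γ : Set (Sentence V)} {r : Option (Sentence V)}
    (hΓ : ∀ γ ∈ Γ, Der0O r γ) (β : Sentence V) :
    ∀ γ ∈ insert β Γ, Der0O (extend r β) γ := by
  rintro γ (rfl | hγ)
  · exact der0_extend_self r γ
  · exact (hΓ γ hγ).extend β

namespace DBTree

def full (V : Type) : ℕ → DBTree V
  | 0 => .leaf
  | n + 1 => .node .bot (full V n) (full V n)

theorem grow_full (n : ℕ) : Grow n (full V n) (full V (n + 1)) := by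
  induction n with
  | zero => exact .expand _
  | succ n ih => exact .node _ ih ih

theorem full_succ_ne (n : ℕ) : full V (n + 1) ≠ full V n := by
  induction n with
  | zero => simp [full]
  | succ n ih => exact fun h => ih (DBTree.node.inj h).2.1

end DBTree

namespace DBTSeq

def full (V : Type) : DBTSeq V where
  tree := DBTree.full V
  init := rfl
  grow := DBTree.grow_full
  progress := DBTree.full_succ_ne

def joinTree (β : Sentence V) (S₁ S₂ : DBTSeq V) : ℕ → DBTree V
  | 0 => .leaf
  | n + 1 => .node β (S₁.tree n) (S₂.tree n)

def join (β : Sentence V) (S₁ S₂ : DBTSeq V) : DBTSeq V where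
  tree := joinTree β S₁ S₂
  init := rfl
  grow
    | 0 => by
      simp only [joinTree, S₁.init, S₂.init]
      exact .expand β
    | n + 1 => .node β (S₁.grow n) (S₂.grow n)
  progress
    | 0 => by simp [joinTree]
    | n + 1 => fun h => S₁.progress n (DBTree.node.inj h).2.1

end DBTSeq

theorem isDepthKTree_leaf : IsDepthKTree 0 (.leaf : DBTree V) :=
  ⟨DBTSeq.full V, rfl⟩

theorem IsDepthKTree.node {k : ℕ} {t₁ t₂ : DBTree V} (β : Sentence V)
    (h₁ : IsDepthKTree k t₁) (h₂ : IsDepthKTree k t₂) :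
    IsDepthKTree (k + 1) (.node β t₁ t₂) := by
  obtain ⟨S₁, rfl⟩ := h₁
  obtain ⟨S₂, rfl⟩ := h₂
  exact ⟨DBTSeq.join β S₁ S₂, rfl⟩

theorem DerK.exists_tree_of_forall_der0 [DecidableEq V] {k : ℕ} {Γ : Set (Sentence V)}
    {ψ : Sentence V} {r : Option (Sentence V)} (h : DerK k Γ ψ) (hΓ : ∀ γ ∈ Γ, Der0O r γ) :
    ∃ t : DBTree V, IsDepthKTree k t ∧ ∀ α ∈ leafLabels r t, Der0O α ψ := by
  induction k generalizing Γ r with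
  | zero =>
    refine ⟨.leaf, isDepthKTree_leaf, fun α hα => ?_⟩
    obtain rfl : α = r := Finset.mem_singleton.mp hα
    exact Der0.cut h hΓ
  | succ k ih =>
    obtain ⟨β, -, hpos, hneg⟩ := h
    obtain ⟨t₁, ht₁, hl₁⟩ := ih hpos (forall_der0_extend_of_insert hΓ β)
    obtain ⟨t₂, ht₂, hl₂⟩ := ih hneg (forall_der0_extend_of_insert hΓ (.neg β))
    refine ⟨.node β t₁ t₂, ht₁.node β ht₂, fun α hα => ?_⟩
    rcases Finset.mem_union.mp hα with hα | hα
    exacts [hl₁ α hα, hl₂ α hα]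

theorem derK_yields_closed_tree_general {V : Type} [DecidableEq V]
    (k : ℕ) (φ : Option (Sentence V)) (ψ : Sentence V)
    (h : DerKO k φ ψ) :
    ∃ t : DBTree V, IsDepthKTree k t ∧ ∀ α ∈ leafLabels φ t, Der0O α ψ :=
  DerK.exists_tree_of_forall_der0 h fun _ hγ => .prem hγ

/-- If `φ ⊢ₖ ψ` (`φ ∈ SL ∪ {*}`, `ψ ∈ SL`), then there exists a tree `T_k` of
depth `k` rooted in `φ` (member of some DBT-sequence) such that `α ⊢₀ ψ` for every leaf
`α ∈ Le(T_k)`. -/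
theorem derK_yields_closed_tree {V : Type} [DecidableEq V] [Fintype V]
    (k : ℕ) (φ : Option (Sentence V)) (ψ : Sentence V)
    (h : DerKO k φ ψ) :
    ∃ t : DBTree V, IsDepthKTree k t ∧ ∀ α ∈ leafLabels φ t, Der0O α ψ :=
  derK_yields_closed_tree_general k φ ψ h

end DBB
end

section
/- Let k ∈ ℕ and φ, ψ ∈ SL. If φ ⊢_k ψ, then ⊢_{k+1} ¬φ∨ψ (i.e. the empty set of premises derives ¬φ∨ψ at depth k+1). -/
/-!
Common framework: Depth-Bounded Boolean Logics, depth-bounded trees/forests,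
mass functions and depth-bounded belief functions.
-/

namespace DBB

variable {V : Type}

lemma der0_mono {V : Type} {Γ Δ : Set (Sentence V)} {χ : Sentence V}
    (h : Der0 Γ χ) (hs : Γ ⊆ Δ) : Der0 Δ χ := by
  induction h with
  | prem h => exact .prem (hs h)
  | andI _ _ ih1 ih2 => exact .andI ih1 ih2
  | andE1 _ ih => exact .andE1 ih
  | andE2 _ ih => exact .andE2 ih
  | orI1 _ ih => exact .orI1 ih
  | orI2 _ ih => exact .orI2 ih
  | orE1 _ _ ih1 ih2 => exact .orE1 ih1 ih2
  | orE2 _ _ ih1 ih2 => exact .orE2 ih1 ih2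
  | negAndI1 _ ih => exact .negAndI1 ih
  | negAndI2 _ ih => exact .negAndI2 ih
  | negAndE1 _ _ ih1 ih2 => exact .negAndE1 ih1 ih2
  | negAndE2 _ _ ih1 ih2 => exact .negAndE2 ih1 ih2
  | negOrI _ _ ih1 ih2 => exact .negOrI ih1 ih2
  | negOrE1 _ ih => exact .negOrE1 ih
  | negOrE2 _ ih => exact .negOrE2 ih
  | dnI _ ih => exact .dnI ih
  | dnE _ ih => exact .dnE ih
  | botI _ _ ih1 ih2 => exact .botI ih1 ih2
  | botE _ ih => exact .botE ih

lemma mem_subs_self {V : Type} (χ : Sentence V) : χ ∈ subs χ := by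
  cases χ <;> simp [subs]

lemma derK_of_der0 {V : Type} (k : ℕ) {Γ : Set (Sentence V)} {χ : Sentence V}
    (h : Der0 Γ χ) : DerK k Γ χ := by
  induction k generalizing Γ with
  | zero => exact h
  | succ k ih =>
    refine ⟨χ, ?_, ih (der0_mono h (Set.subset_insert _ _)),
      ih (der0_mono h (Set.subset_insert _ _))⟩
    exact Set.mem_biUnion (Set.mem_insert _ _) (mem_subs_self χ)

lemma derK_orI2 {V : Type} (k : ℕ) {Γ : Set (Sentence V)} {χ ψ : Sentence V}
    (h : DerK k Γ ψ) : DerK k Γ (.disj χ ψ) := by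
  induction k generalizing Γ with
  | zero => exact Der0.orI2 h
  | succ k ih =>
    obtain ⟨β, hβ, h1, h2⟩ := h
    refine ⟨β, ?_, ih h1, ih h2⟩
    obtain ⟨_, ⟨γ, rfl⟩, _, ⟨hγ, rfl⟩, hb⟩ := hβ
    rcases hγ with rfl | hγ
    · exact Set.mem_biUnion (Set.mem_insert _ _)
        (by simpa [subs] using Or.inr (Or.inr hb))
    · exact Set.mem_biUnion (Set.mem_insert_of_mem _ hγ) hb

/-- If `φ ⊢ₖ ψ`, then `⊢_{k+1} ¬φ ∨ ψ` (from the empty set of premises). -/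
theorem derK_succ_material_implication {V : Type} [DecidableEq V] [Fintype V]
    (k : ℕ) (φ ψ : Sentence V) (h : DerK k {φ} ψ) :
    DerK (k+1) (∅ : Set (Sentence V)) (.disj (.neg φ) ψ) := by
  refine ⟨φ, ?_, ?_, ?_⟩
  · exact Set.mem_biUnion (Set.mem_insert _ _)
      (by simp [subs]; exact Or.inr (Or.inl (Or.inr (mem_subs_self φ))))
  · have : DerK k {φ} (Sentence.disj (.neg φ) ψ) := derK_orI2 k h
    simpa using this
  · exact derK_of_der0 k (Der0.orI1 (.prem (Set.mem_insert _ _)))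

end DBB
end

section
/- Let (F_k, m_k) be a DBM-sequence based on Supp ⊆ SL∪{*}, let k ∈ ℕ and φ ∈ SL. If ⊢_k ¬φ (from the empty premise set), then B_k(φ) = 0, provided F_k is {φ}-maximal and free of deep contradictions. -/
/-!
Common framework: Depth-Bounded Boolean Logics, depth-bounded trees/forests,
mass functions and depth-bounded belief functions.
-/

namespace DBB

variable {V : Type}

lemma der0_sound' {Γ : Set (Sentence V)} {φ : Sentence V} (h : Der0 Γ φ) : CC Γ φ := by
  induction h with
  | prem h => exact fun v hv => hv _ h
  | andI _ _ ih1 ih2 => intro v hv; have h1 := ih1 v hv; have h2 := ih2 v hv; simp_all [eval]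
  | andE1 _ ih => intro v hv; have h1 := ih v hv; simp [eval] at h1; exact h1.1
  | andE2 _ ih => intro v hv; have h1 := ih v hv; simp [eval] at h1; exact h1.2
  | orI1 _ ih => intro v hv; have h1 := ih v hv; simp_all [eval]
  | orI2 _ ih => intro v hv; have h1 := ih v hv; simp_all [eval]
  | orE1 _ _ ih1 ih2 => intro v hv; have h1 := ih1 v hv; have h2 := ih2 v hv; simp_all [eval]
  | orE2 _ _ ih1 ih2 => intro v hv; have h1 := ih1 v hv; have h2 := ih2 v hv; simp_all [eval]
  | negAndI1 _ ih => intro v hv; have h1 := ih v hv; simp_all [eval]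
  | negAndI2 _ ih => intro v hv; have h1 := ih v hv; simp_all [eval]
  | negAndE1 _ _ ih1 ih2 =>
      intro v hv; have h1 := ih1 v hv; have h2 := ih2 v hv; simp_all [eval]
  | negAndE2 _ _ ih1 ih2 =>
      intro v hv; have h1 := ih1 v hv; have h2 := ih2 v hv; simp_all [eval]
  | negOrI _ _ ih1 ih2 => intro v hv; have h1 := ih1 v hv; have h2 := ih2 v hv; simp_all [eval]
  | negOrE1 _ ih => intro v hv; have h1 := ih v hv; simp_all [eval]
  | negOrE2 _ ih => intro v hv; have h1 := ih v hv; simp_all [eval]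
  | dnI _ ih => intro v hv; have h1 := ih v hv; simp_all [eval]
  | dnE _ ih => intro v hv; have h1 := ih v hv; simp_all [eval]
  | botI _ _ ih1 ih2 => intro v hv; have h1 := ih1 v hv; have h2 := ih2 v hv; simp_all [eval]
  | botE _ ih => intro v hv; have h1 := ih v hv; simp [eval] at h1

lemma derK_sound' : ∀ (k : ℕ) {Γ : Set (Sentence V)} {φ : Sentence V},
    DerK k Γ φ → CC Γ φ
  | 0, _, _, h => der0_sound' h
  | k+1, Γ, φ, ⟨β, _, h1, h2⟩ => by
      intro v hv
      by_cases hb : eval v β = true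
      · refine derK_sound' k h1 v ?_
        intro γ hγ
        rcases hγ with hγ | hγ
        · subst hγ; exact hb
        · exact hv _ hγ
      · refine derK_sound' k h2 v ?_
        intro γ hγ
        rcases hγ with hγ | hγ
        · subst hγ; simp [eval, hb]
        · exact hv _ hγ

/-- For a DBM-sequence `(F_k, m_k)` based on `Supp ⊆ SL ∪ {*}`, if `⊢ₖ ¬φ`
(from the empty premise set) then `B_k(φ) = 0`, provided `F_k` is `{φ}`-maximal and free of
deep contradictions. -/
theorem belief_zero_of_derK_neg {V : Type} [DecidableEq V] [Fintype V]
    (M : DBMSeq V) (k : ℕ) (φ : Sentence V)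
    (h : DerK k (∅ : Set (Sentence V)) (.neg φ))
    (hmax : M.toDBFSeq.Maximal k φ) (hfree : M.toDBFSeq.FreeDC k) :
    M.B k φ = 0 := by
  classical
  have hneg : CC (∅ : Set (Sentence V)) (.neg φ) := derK_sound' k h
  unfold DBMSeq.B
  refine Finset.sum_eq_zero ?_
  intro α hα
  rw [if_neg]
  rintro ⟨hder, hnbot⟩
  -- α classically entails φ, but ¬φ is a tautology, so α is classically inconsistent
  have hccφ : CC (prems α) φ := der0_sound' hder
  have hccbot : CCO α Sentence.bot := by
    intro v hv
    have h1 := hccφ v hv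
    have h2 := hneg v (by intro γ hγ; exact absurd hγ (Set.notMem_empty γ))
    simp [eval, h1] at h2
  -- find the tree of the forest containing α as a leaf
  rcases Finset.mem_biUnion.mp (by simpa [DBFSeq.leaves] using hα) with ⟨γ, hγ, hmem⟩
  exact hnbot (hfree γ hγ α hmem hccbot)

end DBB
end
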